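/- arXiv:1508.06023 — 2 statements merged into one kernel-verified Lean document; each statement's English description precedes it below -/
import Mathlib

section
/- Let K be a complete non-archimedean valued field whose residue characteristic does not divide the integer d ≥ 2, let v be its absolute value, and let β ∈ K with |β| = 1 and such that β^{d^n} ≠ 1 for all n ≥ 0. Suppose that for every r with 0 < r < 1 there are only finitely many d-power roots of unity ζ in K with 0 < |1 - ζ| < r. Then the sequence |1 - β^{d^n}| does not tend to 0 as n → ∞. -/
open Filter

lemma aux_norm_one_sub_pow_d {K : Type*} [NormedField K] [IsUltrametricDist K]
    (d : ℕ) (hdunit : ‖(d : K)‖ = 1) (x : K) (hx : ‖1 - x‖ < 1) :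
    ‖1 - x ^ d‖ = ‖1 - x‖ := by
  have hgeom : 1 - x ^ d = (1 - x) * ∑ i ∈ Finset.range d, x ^ i := by
    linear_combination geom_sum_mul x d
  have hxnorm : ‖x‖ ≤ 1 := by
    have h1 : x = 1 + (x - 1) := by ring
    calc ‖x‖ = ‖1 + (x - 1)‖ := by rw [← h1]
      _ ≤ max ‖(1 : K)‖ ‖x - 1‖ := IsUltrametricDist.norm_add_le_max _ _
      _ ≤ 1 := max_le (by simp) (by rw [norm_sub_rev]; exact hx.le)
  have hxi : ∀ i : ℕ, ‖x ^ i - 1‖ ≤ ‖x - 1‖ := by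
    intro i
    have hi : x ^ i - 1 = (∑ j ∈ Finset.range i, x ^ j) * (x - 1) := (geom_sum_mul x i).symm
    have hsum : ‖∑ j ∈ Finset.range i, x ^ j‖ ≤ 1 := by
      apply IsUltrametricDist.norm_sum_le_of_forall_le_of_nonneg zero_le_one
      intro j _
      rw [norm_pow]
      exact pow_le_one₀ (norm_nonneg x) hxnorm
    calc ‖x ^ i - 1‖ = ‖∑ j ∈ Finset.range i, x ^ j‖ * ‖x - 1‖ := by rw [hi, norm_mul]
      _ ≤ 1 * ‖x - 1‖ := mul_le_mul_of_nonneg_right hsum (norm_nonneg _)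
      _ = ‖x - 1‖ := one_mul _
  have hsum1 : ‖∑ i ∈ Finset.range d, x ^ i‖ = 1 := by
    have hdecomp : ∑ i ∈ Finset.range d, x ^ i
        = (d : K) + ∑ i ∈ Finset.range d, (x ^ i - 1) := by
      rw [Finset.sum_sub_distrib]
      simp
    have herr : ‖∑ i ∈ Finset.range d, (x ^ i - 1)‖ < 1 := by
      calc ‖∑ i ∈ Finset.range d, (x ^ i - 1)‖ ≤ ‖x - 1‖ :=
            IsUltrametricDist.norm_sum_le_of_forall_le_of_nonneg (norm_nonneg _)
              (fun i _ => hxi i)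
        _ < 1 := by rw [norm_sub_rev]; exact hx
    rw [hdecomp]
    have hne : ‖(d : K)‖ ≠ ‖∑ i ∈ Finset.range d, (x ^ i - 1)‖ := by
      rw [hdunit]; exact ne_of_gt herr
    rw [IsUltrametricDist.norm_add_eq_max_of_norm_ne_norm hne, hdunit]
    exact max_eq_left herr.le
  rw [hgeom, norm_mul, hsum1, mul_one]

/-- Let `K` be a complete non-archimedean valued field whose residue characteristic
does not divide `d ≥ 2` (i.e. `|d| = 1`), and `β ∈ K` with `|β| = 1` such that
`β^(d^n) ≠ 1` for all `n`.  If for every `0 < r < 1` there are only finitely many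
`d`-power roots of unity `ζ ∈ K` with `0 < |1 - ζ| < r`, then `|1 - β^(d^n)|` does
not tend to `0` as `n → ∞`. -/
theorem stmt_7 {K : Type*} [NormedField K] [CompleteSpace K] [IsUltrametricDist K]
    (d : ℕ) (hd : 2 ≤ d) (hdunit : ‖(d : K)‖ = 1)
    (β : K) (hβ : ‖β‖ = 1) (hβpow : ∀ n : ℕ, β ^ d ^ n ≠ 1)
    (hfin : ∀ r : ℝ, 0 < r → r < 1 →
      {ζ : K | (∃ n : ℕ, ζ ^ d ^ n = 1) ∧ 0 < ‖1 - ζ‖ ∧ ‖1 - ζ‖ < r}.Finite) :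
    ¬ Tendsto (fun n : ℕ => ‖1 - β ^ d ^ n‖) atTop (nhds 0) := by
  intro h
  obtain ⟨N, hN⟩ := (Metric.tendsto_atTop.mp h 1 one_pos)
  have hNlt : ‖1 - β ^ d ^ N‖ < 1 := by
    have := hN N le_rfl
    simpa [Real.dist_eq, abs_of_nonneg (norm_nonneg _)] using this
  have hconst : ∀ m, ‖1 - β ^ d ^ (N + m)‖ = ‖1 - β ^ d ^ N‖ := by
    intro m
    induction m with
    | zero => rfl
    | succ k ih =>
      have : β ^ d ^ (N + (k + 1)) = (β ^ d ^ (N + k)) ^ d := by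
        rw [← pow_mul, ← pow_succ]
        ring_nf
      rw [this, aux_norm_one_sub_pow_d d hdunit _ (by rw [ih]; exact hNlt), ih]
  have hpos : 0 < ‖1 - β ^ d ^ N‖ := by
    rw [norm_pos_iff, sub_ne_zero]
    exact fun e => hβpow N e.symm
  obtain ⟨M, hM⟩ := Metric.tendsto_atTop.mp h (‖1 - β ^ d ^ N‖) hpos
  have := hM (N + M) (by omega)
  rw [hconst M] at this
  simp [Real.dist_eq, abs_of_nonneg (norm_nonneg _)] at this
end

section
/- Northcott's theorem for function fields: Let K be a finite extension of F_p(t). For every real B ≥ 0, the set {α ∈ K : h(α) ≤ B} is finite. -/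
open Polynomial

/-- The primitive integral model in `𝔽_p[t][X]` of the minimal polynomial of `α`
over `𝔽_p(t)` (clear denominators, then divide by the content). -/
noncomputable def minpolyModel (p : ℕ) [Fact p.Prime] {K : Type*} [Field K]
    [Algebra (RatFunc (ZMod p)) K] (α : K) : Polynomial (Polynomial (ZMod p)) :=
  (IsLocalization.integerNormalization (nonZeroDivisors (Polynomial (ZMod p)))
    (minpoly (RatFunc (ZMod p)) α)).primPart

/-- The absolute logarithmic Weil height of an element `α` of an algebraic extension
of `𝔽_p(t)`.  All places of a function field are non-archimedean, so the height
`h(α) = (1/[L:𝔽_p(t)]) Σ_{v ∈ M_L} log max (1, |α|_v)` equals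
`log p · (max_i deg_t (coeff i of the primitive model of minpoly α)) / deg (minpoly α)`. -/
noncomputable def weilHeight (p : ℕ) [Fact p.Prime] {K : Type*} [Field K]
    [Algebra (RatFunc (ZMod p)) K] (α : K) : ℝ :=
  Real.log p *
    ((minpolyModel p α).support.sup fun i => ((minpolyModel p α).coeff i).natDegree) /
    (minpoly (RatFunc (ZMod p)) α).natDegree

/-- Polynomials with bounded degree and coefficients in a finite set form a finite set. -/
lemma finite_polys {R : Type*} [Semiring R] (T : Set R) (hT : T.Finite) (N : ℕ) :
    {q : Polynomial R | q.natDegree ≤ N ∧ ∀ i, q.coeff i ∈ T}.Finite := by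
  apply Set.Finite.of_finite_image (f := fun (q : Polynomial R) (i : Fin (N + 1)) => q.coeff i)
  · apply Set.Finite.subset (Set.Finite.pi fun _ : Fin (N + 1) => hT)
    rintro g ⟨q, hq, rfl⟩
    intro i _
    exact hq.2 i
  · rintro q1 hq1 q2 hq2 h
    ext i
    by_cases hi : i ≤ N
    · exact congrFun h ⟨i, Nat.lt_succ_of_le hi⟩
    · push_neg at hi
      rw [Polynomial.coeff_eq_zero_of_natDegree_lt (lt_of_le_of_lt hq1.1 hi),
        Polynomial.coeff_eq_zero_of_natDegree_lt (lt_of_le_of_lt hq2.1 hi)]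

/-- Northcott's theorem for function fields: if `K` is a finite extension of
`𝔽_p(t)`, then for every real `B ≥ 0` the set `{α ∈ K : h(α) ≤ B}` is finite. -/
theorem stmt_11 (p : ℕ) [Fact p.Prime] (K : Type*) [Field K]
    [Algebra (RatFunc (ZMod p)) K] [FiniteDimensional (RatFunc (ZMod p)) K]
    (B : ℝ) (hB : 0 ≤ B) :
    {α : K | weilHeight p α ≤ B}.Finite := by
  set F := RatFunc (ZMod p)
  have hp2 : (1 : ℝ) < p := by exact_mod_cast (Fact.out : p.Prime).one_lt
  have hlog : 0 < Real.log p := Real.log_pos hp2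
  set n := Module.finrank F K with hn
  set N := Nat.ceil (B * n / Real.log p) with hNdef
  set φ : Polynomial (ZMod p) →+* F := algebraMap (Polynomial (ZMod p)) F with hφdef
  have hφinj : Function.Injective φ := IsFractionRing.injective _ _
  set ψ : Polynomial (ZMod p) →+* K := (algebraMap F K).comp φ with hψdef
  have hψinj : Function.Injective ψ := (algebraMap F K).injective.comp hφinj
  -- finite set of candidate polynomials
  have hTfin : ({r : Polynomial (ZMod p) | r.natDegree ≤ N} : Set _).Finite := by
    have h1 := finite_polys (Set.univ : Set (ZMod p)) Set.finite_univ N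
    exact h1.subset fun r hr => ⟨hr, fun _ => Set.mem_univ _⟩
  have hSfin : ({q : Polynomial (Polynomial (ZMod p)) |
      q.natDegree ≤ n ∧ ∀ i, (q.coeff i).natDegree ≤ N} : Set _).Finite :=
    finite_polys {r : Polynomial (ZMod p) | r.natDegree ≤ N} hTfin n
  -- each candidate polynomial has finitely many "roots"
  have hroots : ∀ q : Polynomial (Polynomial (ZMod p)),
      ({α : K | q ≠ 0 ∧ Polynomial.eval₂ ψ α q = 0} : Set K).Finite := by
    intro q
    by_cases hq : q = 0
    · simp [hq]
    · apply (Polynomial.finite_setOf_isRoot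
        ((Polynomial.map_ne_zero_iff hψinj).mpr hq) (p := q.map ψ)).subset
      rintro α ⟨-, hα⟩
      simpa [Polynomial.IsRoot, Polynomial.eval_map] using hα
  apply Set.Finite.subset (hSfin.biUnion fun q _ => hroots q)
  intro α hα
  simp only [Set.mem_setOf_eq] at hα
  have hint : IsIntegral F α := IsIntegral.of_finite F α
  set m := minpoly F α with hmdef
  have hm0 : m ≠ 0 := minpoly.ne_zero hint
  set q0 := IsLocalization.integerNormalization (nonZeroDivisors (Polynomial (ZMod p))) m
    with hq0def
  have hq00 : q0 ≠ 0 := fun h => hm0 (IsFractionRing.integerNormalization_eq_zero_iff.mp h)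
  -- degree of q0 equals degree of m
  obtain ⟨b, hb⟩ := IsLocalization.integerNormalization_map_to_map
    (nonZeroDivisors (Polynomial (ZMod p))) m
  have hbne : φ (b : Polynomial (ZMod p)) ≠ 0 := fun h =>
    nonZeroDivisors.ne_zero b.2 (hφinj (h.trans (map_zero φ).symm))
  have hdeg0 : q0.natDegree = m.natDegree := by
    have h1 : (q0.map φ).natDegree = q0.natDegree :=
      Polynomial.natDegree_map_eq_of_injective hφinj q0
    have h2 : ((b : Polynomial (ZMod p)) • m) = Polynomial.C (φ (b : Polynomial (ZMod p))) * m := by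
      rw [← Polynomial.smul_eq_C_mul, algebraMap_smul]
    rw [← h1, hb, h2, Polynomial.natDegree_C_mul hbne]
  have hdeg : (minpolyModel p α).natDegree = m.natDegree := by
    rw [minpolyModel, ← hmdef, ← hq0def, Polynomial.natDegree_primPart, hdeg0]
  have hdpos : 0 < m.natDegree := minpoly.natDegree_pos hint
  have hdle : m.natDegree ≤ n := minpoly.natDegree_le α
  -- the coefficient-degree bound
  set D := (minpolyModel p α).support.sup fun i => ((minpolyModel p α).coeff i).natDegree with hDdef
  have hDN : D ≤ N := by
    have h1 : Real.log p * D / m.natDegree ≤ B := hα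
    have hd : (0 : ℝ) < (m.natDegree : ℝ) := by exact_mod_cast hdpos
    rw [div_le_iff₀ hd] at h1
    have h2 : (D : ℝ) ≤ B * n / Real.log p := by
      rw [le_div_iff₀ hlog]
      calc (D : ℝ) * Real.log p = Real.log p * D := by ring
        _ ≤ B * m.natDegree := h1
        _ ≤ B * n := by
            apply mul_le_mul_of_nonneg_left _ hB
            exact_mod_cast hdle
    have h3 : (D : ℝ) ≤ (N : ℝ) := h2.trans (Nat.le_ceil _)
    exact_mod_cast h3
  refine Set.mem_biUnion (s := {q : Polynomial (Polynomial (ZMod p)) |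
      q.natDegree ≤ n ∧ ∀ i, (q.coeff i).natDegree ≤ N}) (x := minpolyModel p α) ?_ ?_
  · refine ⟨hdeg ▸ hdle, fun i => ?_⟩
    by_cases hi : i ∈ (minpolyModel p α).support
    · exact le_trans (Finset.le_sup (f := fun i => ((minpolyModel p α).coeff i).natDegree) hi) hDN
    · rw [Polynomial.notMem_support_iff.mp hi]
      simp
  · refine ⟨Polynomial.primPart_ne_zero _, ?_⟩
    -- α is a root of the integral model
    have hev0 : Polynomial.eval₂ (algebraMap F K) α m = 0 := by
      rw [← Polynomial.aeval_def]; exact minpoly.aeval F α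
    have hevq0 : Polynomial.eval₂ ψ α q0 = 0 :=
      IsLocalization.integerNormalization_eval₂_eq_zero (nonZeroDivisors (Polynomial (ZMod p)))
        (algebraMap F K) m hev0
    have hcont : q0.content ≠ 0 := fun h => hq00 (Polynomial.content_eq_zero_iff.mp h)
    have hfact := q0.eq_C_content_mul_primPart
    have : Polynomial.eval₂ ψ α q0 =
        ψ q0.content * Polynomial.eval₂ ψ α q0.primPart := by
      conv_lhs => rw [hfact]
      rw [Polynomial.eval₂_mul, Polynomial.eval₂_C]
    rw [this] at hevq0
    rcases mul_eq_zero.mp hevq0 with h | h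
    · exact absurd h (fun h => hcont (hψinj (h.trans (map_zero ψ).symm)))
    · exact h
end
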